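/- arXiv:1906.01067 — 2 statements merged into one kernel-verified Lean document; each statement's English description precedes it below -/
import Mathlib

section
/- Let s ∈ ℂ and let u : ℝ × ℝ → ℂ be smooth on the open set {(x,y) : y > 0}, satisfy u(x+1, y) = u(x, y) for all y > 0, and satisfy the hyperbolic Laplace eigenvalue equation −y²(∂²u/∂x² + ∂²u/∂y²)(x,y) = s(1−s)·u(x,y) for all y > 0. For n ∈ ℤ define the n-th Fourier coefficient a_n(y) = ∫₀¹ u(x,y)·e^{−2πinx} dx. Then for all y > 0, a_n is twice differentiable at y and a_n''(y) = (4π²n² − s(1−s)/y²)·a_n(y). -/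
open Complex Real intervalIntegral

/-- Partial derivative in the first variable of a function on `ℝ × ℝ`. -/
noncomputable def pdx (f : ℝ × ℝ → ℂ) (p : ℝ × ℝ) : ℂ :=
  deriv (fun a : ℝ => f (a, p.2)) p.1

/-- Partial derivative in the second variable of a function on `ℝ × ℝ`. -/
noncomputable def pdy (f : ℝ × ℝ → ℂ) (p : ℝ × ℝ) : ℂ :=
  deriv (fun b : ℝ => f (p.1, b)) p.2

section Helpers
open Filter Topology Metric MeasureTheory

lemma hasDerivAt_slice_x {f : ℝ × ℝ → ℂ} {p : ℝ × ℝ} (hf : DifferentiableAt ℝ f p) :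
    HasDerivAt (fun a : ℝ => f (a, p.2)) (fderiv ℝ f p (1, 0)) p.1 := by
  have h1 : HasDerivAt (fun a : ℝ => (a, p.2)) ((1 : ℝ), (0 : ℝ)) p.1 :=
    (hasDerivAt_id p.1).prodMk (hasDerivAt_const p.1 p.2)
  exact hf.hasFDerivAt.comp_hasDerivAt p.1 h1

lemma hasDerivAt_slice_y {f : ℝ × ℝ → ℂ} {p : ℝ × ℝ} (hf : DifferentiableAt ℝ f p) :
    HasDerivAt (fun b : ℝ => f (p.1, b)) (fderiv ℝ f p (0, 1)) p.2 := by
  have h1 : HasDerivAt (fun b : ℝ => (p.1, b)) ((0 : ℝ), (1 : ℝ)) p.2 :=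
    (hasDerivAt_const p.2 p.1).prodMk (hasDerivAt_id p.2)
  exact hf.hasFDerivAt.comp_hasDerivAt p.2 h1

lemma hasDerivAt_param_integral (g h : ℝ × ℝ → ℂ) (e : ℝ → ℂ)
    (hg : ContinuousOn g {p : ℝ × ℝ | 0 < p.2})
    (hh : ContinuousOn h {p : ℝ × ℝ | 0 < p.2})
    (hd : ∀ p : ℝ × ℝ, 0 < p.2 → HasDerivAt (fun b => g (p.1, b)) (h p) p.2)
    (he : Continuous e) (hebd : ∀ x, ‖e x‖ ≤ 1)
    {y : ℝ} (hy : 0 < y) :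
    HasDerivAt (fun t => ∫ x in (0:ℝ)..1, g (x, t) * e x)
      (∫ x in (0:ℝ)..1, h (x, y) * e x) y := by
  have hyhalf : 0 < y / 2 := by linarith
  have hKc : IsCompact (Set.Icc (0:ℝ) 1 ×ˢ Set.Icc (y/2) (3*y/2)) :=
    isCompact_Icc.prod isCompact_Icc
  obtain ⟨C, hC⟩ := hKc.exists_bound_of_continuousOn (hh.mono (by
    rintro ⟨a, b⟩ ⟨_, hb⟩
    exact lt_of_lt_of_le hyhalf hb.1))
  have hslice : ∀ (f : ℝ × ℝ → ℂ), ContinuousOn f {p : ℝ × ℝ | 0 < p.2} →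
      ∀ t : ℝ, 0 < t → Continuous fun x => f (x, t) * e x := by
    intro f hf t ht
    exact (hf.comp_continuous (continuous_id.prodMk continuous_const)
      (fun x => ht)).mul he
  have main := intervalIntegral.hasDerivAt_integral_of_dominated_loc_of_deriv_le
    (F := fun t x => g (x, t) * e x) (F' := fun t x => h (x, t) * e x)
    (x₀ := y) (a := 0) (b := 1) (bound := fun _ => C) (μ := volume) (Metric.ball_mem_nhds y hyhalf)
    ?_ ?_ ?_ ?_ ?_ ?_
  · exact main.2
  · filter_upwards [eventually_gt_nhds hy] with t ht
    exact ((hslice g hg t ht).aestronglyMeasurable).restrict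
  · exact (hslice g hg y hy).intervalIntegrable 0 1
  · exact ((hslice h hh y hy).aestronglyMeasurable).restrict
  · refine Filter.Eventually.of_forall fun t ht x hx => ?_
    rw [Set.uIoc_of_le (by norm_num : (0:ℝ) ≤ 1)] at ht
    have hxI : x ∈ Set.Icc (y/2) (3*y/2) := by
      rw [mem_ball, Real.dist_eq, abs_lt] at hx
      constructor <;> linarith [hx.1, hx.2]
    calc ‖h (t, x) * e t‖ = ‖h (t, x)‖ * ‖e t‖ := norm_mul _ _
      _ ≤ ‖h (t, x)‖ * 1 := by
          exact mul_le_mul_of_nonneg_left (hebd t) (norm_nonneg _)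
      _ ≤ C := by
          rw [mul_one]
          exact hC (t, x) ⟨⟨le_of_lt ht.1, ht.2⟩, hxI⟩
  · exact intervalIntegrable_const
  · refine Filter.Eventually.of_forall fun t ht x hx => ?_
    have hx0 : 0 < x := by
      rw [mem_ball, Real.dist_eq, abs_lt] at hx
      linarith [hx.1]
    exact (hd (t, x) hx0).mul_const (e t)

end Helpers

open Filter Topology Metric MeasureTheory

set_option maxHeartbeats 1000000 in
/-- Let `u` be smooth on the upper half-plane, `1`-periodic in `x`, and a hyperbolic Laplace
eigenfunction with eigenvalue `s(1-s)`. Then each Fourier coefficient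
`aₙ(y) = ∫₀¹ u(x,y) e^{-2πinx} dx` is twice differentiable on `(0,∞)` and satisfies the
modified Bessel equation `aₙ''(y) = (4π²n² - s(1-s)/y²)·aₙ(y)`. -/
theorem fourier_coefficient_ode (s : ℂ) (u : ℝ × ℝ → ℂ)
    (hu : ContDiffOn ℝ (⊤ : ℕ∞) u {p : ℝ × ℝ | 0 < p.2})
    (hper : ∀ x y : ℝ, 0 < y → u (x + 1, y) = u (x, y))
    (heig : ∀ x y : ℝ, 0 < y →
      -(y : ℂ) ^ 2 * (pdx (pdx u) (x, y) + pdy (pdy u) (x, y)) = s * (1 - s) * u (x, y))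
    (a : ℤ → ℝ → ℂ)
    (ha : ∀ (n : ℤ) (y : ℝ),
      a n y = ∫ x in (0 : ℝ)..1, u (x, y) * Complex.exp (-(2 * π * n * x) * Complex.I)) :
    ∀ (n : ℤ) (y : ℝ), 0 < y →
      DifferentiableAt ℝ (a n) y ∧ DifferentiableAt ℝ (deriv (a n)) y ∧
      deriv (deriv (a n)) y =
        (4 * (π : ℂ) ^ 2 * (n : ℂ) ^ 2 - s * (1 - s) / (y : ℂ) ^ 2) * a n y := by
  intro n y0 hy0
  set S : Set (ℝ × ℝ) := {p : ℝ × ℝ | 0 < p.2} with hSdef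
  have hS : IsOpen S := isOpen_lt continuous_const continuous_snd
  have hinf : ContDiffOn ℝ ((⊤ : ℕ∞) : WithTop ℕ∞) u S := hu.of_le (by simp)
  have homega1 : ((⊤ : ℕ∞) : WithTop ℕ∞) + 1 ≤ ((⊤ : ℕ∞) : WithTop ℕ∞) := le_of_eq rfl
  have hone : (1 : WithTop ℕ∞) ≤ ((⊤ : ℕ∞) : WithTop ℕ∞) := by exact_mod_cast le_top
  have hudiff : ∀ p ∈ S, DifferentiableAt ℝ u p := fun p hp =>
    (hinf.contDiffAt (hS.mem_nhds hp)).differentiableAt (by simp)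
  set U1 : ℝ × ℝ → ℂ := fun p => fderiv ℝ u p (1, 0) with hU1def
  set U2 : ℝ × ℝ → ℂ := fun p => fderiv ℝ u p (0, 1) with hU2def
  have hfd : ContDiffOn ℝ ((⊤ : ℕ∞) : WithTop ℕ∞) (fderiv ℝ u) S :=
    hinf.fderiv_of_isOpen hS homega1
  have hU1s : ContDiffOn ℝ ((⊤ : ℕ∞) : WithTop ℕ∞) U1 S := hfd.clm_apply contDiffOn_const
  have hU2s : ContDiffOn ℝ ((⊤ : ℕ∞) : WithTop ℕ∞) U2 S := hfd.clm_apply contDiffOn_const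
  set V1 : ℝ × ℝ → ℂ := fun p => fderiv ℝ U1 p (1, 0) with hV1def
  set V2 : ℝ × ℝ → ℂ := fun p => fderiv ℝ U2 p (0, 1) with hV2def
  have hV1s : ContDiffOn ℝ ((⊤ : ℕ∞) : WithTop ℕ∞) V1 S :=
    (hU1s.fderiv_of_isOpen hS homega1).clm_apply contDiffOn_const
  have hV2s : ContDiffOn ℝ ((⊤ : ℕ∞) : WithTop ℕ∞) V2 S :=
    (hU2s.fderiv_of_isOpen hS homega1).clm_apply contDiffOn_const
  have hU1deriv : ∀ p : ℝ × ℝ, 0 < p.2 →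
      HasDerivAt (fun a : ℝ => u (a, p.2)) (U1 p) p.1 :=
    fun p hp => hasDerivAt_slice_x (hudiff p hp)
  have hU2deriv : ∀ p : ℝ × ℝ, 0 < p.2 →
      HasDerivAt (fun b : ℝ => u (p.1, b)) (U2 p) p.2 :=
    fun p hp => hasDerivAt_slice_y (hudiff p hp)
  have hU1diffAt : ∀ p : ℝ × ℝ, 0 < p.2 → DifferentiableAt ℝ U1 p := fun p hp =>
    (hU1s.contDiffAt (hS.mem_nhds hp)).differentiableAt (by simp)
  have hU2diffAt : ∀ p : ℝ × ℝ, 0 < p.2 → DifferentiableAt ℝ U2 p := fun p hp =>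
    (hU2s.contDiffAt (hS.mem_nhds hp)).differentiableAt (by simp)
  have hV1deriv : ∀ p : ℝ × ℝ, 0 < p.2 →
      HasDerivAt (fun a : ℝ => U1 (a, p.2)) (V1 p) p.1 :=
    fun p hp => hasDerivAt_slice_x (hU1diffAt p hp)
  have hV2deriv : ∀ p : ℝ × ℝ, 0 < p.2 →
      HasDerivAt (fun b : ℝ => U2 (p.1, b)) (V2 p) p.2 :=
    fun p hp => hasDerivAt_slice_y (hU2diffAt p hp)
  -- identification with pdx/pdy
  have hpdx : ∀ p : ℝ × ℝ, 0 < p.2 → pdx u p = U1 p :=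
    fun p hp => (hU1deriv p hp).deriv
  have hpdy : ∀ p : ℝ × ℝ, 0 < p.2 → pdy u p = U2 p :=
    fun p hp => (hU2deriv p hp).deriv
  have hpdxx : ∀ p : ℝ × ℝ, 0 < p.2 → pdx (pdx u) p = V1 p := by
    intro p hp
    have h1 : (fun a : ℝ => pdx u (a, p.2)) = fun a : ℝ => U1 (a, p.2) :=
      funext fun x => hpdx (x, p.2) hp
    show deriv (fun a : ℝ => pdx u (a, p.2)) p.1 = V1 p
    rw [h1]
    exact (hV1deriv p hp).deriv
  have hpdyy : ∀ p : ℝ × ℝ, 0 < p.2 → pdy (pdy u) p = V2 p := by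
    intro p hp
    have hev : (fun b : ℝ => pdy u (p.1, b)) =ᶠ[𝓝 p.2] fun b : ℝ => U2 (p.1, b) := by
      filter_upwards [eventually_gt_nhds hp] with b hb
      exact hpdy (p.1, b) hb
    show deriv (fun b : ℝ => pdy u (p.1, b)) p.2 = V2 p
    rw [hev.deriv_eq]
    exact (hV2deriv p hp).deriv
  -- the PDE in terms of V1, V2
  have hpde : ∀ x t : ℝ, 0 < t →
      V2 (x, t) = -(s * (1 - s)) / (t : ℂ) ^ 2 * u (x, t) - V1 (x, t) := by
    intro x t ht
    have h := heig x t ht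
    rw [hpdxx (x, t) ht, hpdyy (x, t) ht] at h
    have ht' : (t : ℂ) ≠ 0 := Complex.ofReal_ne_zero.2 ht.ne'
    field_simp
    linear_combination -h
  -- the character e and its properties
  set c : ℂ := -(2 * (π : ℂ) * (n : ℂ)) * Complex.I with hcdef
  set e : ℝ → ℂ := fun x : ℝ => Complex.exp (c * (x : ℂ)) with hedef
  have hee : ∀ x : ℝ, Complex.exp (-(2 * (π : ℂ) * (n : ℂ) * (x : ℂ)) * Complex.I) = e x := by
    intro x; rw [hedef]; congr 1; rw [hcdef]; ring
  have hecont : Continuous e := by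
    rw [hedef]; exact Complex.continuous_exp.comp (by continuity)
  have hede : ∀ x : ℝ, HasDerivAt e (c * e x) x := by
    intro x
    have h1 : HasDerivAt (fun w : ℂ => Complex.exp (c * w))
        (Complex.exp (c * (x : ℂ)) * (c * 1)) (x : ℂ) :=
      (Complex.hasDerivAt_exp (c * (x : ℂ))).comp (x : ℂ) ((hasDerivAt_id (x : ℂ)).const_mul c)
    have h2 := h1.comp_ofReal
    show HasDerivAt (fun x : ℝ => Complex.exp (c * (x : ℂ)))
      (c * Complex.exp (c * (x : ℂ))) x
    convert h2 using 1
    ring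
  have henorm : ∀ x : ℝ, ‖e x‖ ≤ 1 := by
    intro x
    rw [hedef]
    have : (c * (x : ℂ)).re = 0 := by rw [hcdef]; simp
    rw [Complex.norm_exp, this, Real.exp_zero]
  have he0 : e 0 = 1 := by rw [hedef]; simp
  have he1 : e 1 = 1 := by
    simp only [hedef]
    have : c * ((1 : ℝ) : ℂ) = (-n : ℤ) * (2 * (π : ℂ) * Complex.I) := by
      rw [hcdef]; push_cast; ring
    rw [this, Complex.exp_int_mul_two_pi_mul_I]
  -- periodicity of u and U1 at the endpoints
  have huper : u (1, y0) = u (0, y0) := by simpa using hper 0 y0 hy0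
  have hU1per : U1 (1, y0) = U1 (0, y0) := by
    have h1 : HasDerivAt (fun x : ℝ => u (x + 1, y0)) (U1 (1, y0)) 0 :=
      HasDerivAt.comp_add_const (f := fun a : ℝ => u (a, y0)) (f' := U1 (1, y0)) 0 1
        (by rw [zero_add]; exact hU1deriv (1, y0) hy0)
    have h2 : HasDerivAt (fun x : ℝ => u (x + 1, y0)) (U1 (0, y0)) 0 := by
      have h3 : (fun x : ℝ => u (x + 1, y0)) = fun x : ℝ => u (x, y0) :=
        funext fun x => hper x y0 hy0
      rw [h3]
      exact hU1deriv (0, y0) hy0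
    exact h1.unique h2
  -- continuity facts
  have hucont : ContinuousOn u S := hinf.continuousOn
  have hU1cont : ContinuousOn U1 S := hU1s.continuousOn
  have hU2cont : ContinuousOn U2 S := hU2s.continuousOn
  have hV1cont : ContinuousOn V1 S := hV1s.continuousOn
  have hV2cont : ContinuousOn V2 S := hV2s.continuousOn
  have hslice : ∀ f : ℝ × ℝ → ℂ, ContinuousOn f S → Continuous fun x : ℝ => f (x, y0) :=
    fun f hf => hf.comp_continuous (continuous_id.prodMk continuous_const) fun x => hy0
  -- a n as an integral against e
  have haeq : a n = fun t => ∫ x in (0 : ℝ)..1, u (x, t) * e x := by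
    funext t
    rw [ha n t]
    apply intervalIntegral.integral_congr
    intro x _
    show u (x, t) * Complex.exp (-(2 * (π : ℂ) * (n : ℂ) * (x : ℂ)) * Complex.I) = u (x, t) * e x
    rw [hee x]
  have hae : (∫ x in (0 : ℝ)..1, u (x, y0) * e x) = a n y0 := by rw [haeq]
  -- first derivative
  have hder1 : ∀ t : ℝ, 0 < t →
      HasDerivAt (a n) (∫ x in (0 : ℝ)..1, U2 (x, t) * e x) t := by
    intro t ht
    rw [haeq]
    exact hasDerivAt_param_integral u U2 e hucont hU2cont hU2deriv hecont henorm ht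
  -- second derivative
  have hder2 : HasDerivAt (fun t => ∫ x in (0 : ℝ)..1, U2 (x, t) * e x)
      (∫ x in (0 : ℝ)..1, V2 (x, y0) * e x) y0 :=
    hasDerivAt_param_integral U2 V2 e hU2cont hV2cont hV2deriv hecont henorm hy0
  have hevent : deriv (a n) =ᶠ[𝓝 y0] fun t => ∫ x in (0 : ℝ)..1, U2 (x, t) * e x := by
    filter_upwards [eventually_gt_nhds hy0] with t ht
    exact (hder1 t ht).deriv
  have hder2' : HasDerivAt (deriv (a n)) (∫ x in (0 : ℝ)..1, V2 (x, y0) * e x) y0 :=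
    hder2.congr_of_eventuallyEq hevent
  refine ⟨(hder1 y0 hy0).differentiableAt, hder2'.differentiableAt, ?_⟩
  rw [hder2'.deriv]
  -- integration by parts
  have hconst_pull : ∀ f : ℝ → ℂ,
      (∫ x in (0 : ℝ)..1, f x * (c * e x)) = c * ∫ x in (0 : ℝ)..1, f x * e x := by
    intro f
    rw [← intervalIntegral.integral_const_mul]
    apply intervalIntegral.integral_congr
    intro x _
    ring
  have hce : Continuous fun x : ℝ => c * e x := continuous_const.mul hecont
  have ibp1 := intervalIntegral.integral_mul_deriv_eq_deriv_mul
    (u := fun x : ℝ => u (x, y0)) (v := e) (u' := fun x : ℝ => U1 (x, y0))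
    (v' := fun x : ℝ => c * e x) (a := 0) (b := 1)
    (fun x _ => hU1deriv (x, y0) hy0) (fun x _ => hede x)
    ((hslice U1 hU1cont).intervalIntegrable 0 1) (hce.intervalIntegrable 0 1)
  rw [hconst_pull, huper, he0, he1, hae] at ibp1
  have hI1 : (∫ x in (0 : ℝ)..1, U1 (x, y0) * e x) = -(c * a n y0) := by
    linear_combination ibp1
  have ibp2 := intervalIntegral.integral_mul_deriv_eq_deriv_mul
    (u := fun x : ℝ => U1 (x, y0)) (v := e) (u' := fun x : ℝ => V1 (x, y0))
    (v' := fun x : ℝ => c * e x) (a := 0) (b := 1)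
    (fun x _ => hV1deriv (x, y0) hy0) (fun x _ => hede x)
    ((hslice V1 hV1cont).intervalIntegrable 0 1) (hce.intervalIntegrable 0 1)
  rw [hconst_pull, hU1per, he0, he1, hI1] at ibp2
  have hI2 : (∫ x in (0 : ℝ)..1, V1 (x, y0) * e x) = c ^ 2 * a n y0 := by
    linear_combination ibp2
  -- put it all together
  have hsplit : (∫ x in (0 : ℝ)..1, V2 (x, y0) * e x)
      = ∫ x in (0 : ℝ)..1,
        (-(s * (1 - s)) / (y0 : ℂ) ^ 2 * (u (x, y0) * e x) - V1 (x, y0) * e x) := by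
    apply intervalIntegral.integral_congr
    intro x _
    show V2 (x, y0) * e x
      = -(s * (1 - s)) / (y0 : ℂ) ^ 2 * (u (x, y0) * e x) - V1 (x, y0) * e x
    rw [hpde x y0 hy0]
    ring
  rw [hsplit, intervalIntegral.integral_sub
    ((show Continuous fun x : ℝ => -(s * (1 - s)) / (y0 : ℂ) ^ 2 * (u (x, y0) * e x) from
      continuous_const.mul ((hslice u hucont).mul hecont)).intervalIntegrable 0 1)
    ((show Continuous fun x : ℝ => V1 (x, y0) * e x from (hslice V1 hV1cont).mul hecont).intervalIntegrable 0 1),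
    intervalIntegral.integral_const_mul, hae, hI2]
  have hc2 : c ^ 2 = -(4 * (π : ℂ) ^ 2 * (n : ℂ) ^ 2) := by
    rw [hcdef, mul_pow, Complex.I_sq]
    ring
  rw [hc2]
  ring
end

section
/- Let s ∈ ℂ and let f : ℝ → ℂ satisfy the transfer-operator eigenfunction equation f(t) = f(t+1) + ((t+1)²)^{−s}·f(t/(t+1)) for all real t > 0. Define c : ℝ → ℂ by c(t) = f(t) for t > 0, c(t) = −(t²)^{−s}·f(−1/t) for t < 0, and c(0) = 0. Then: (i) for all t ≠ 0, (t²)^{−s}·c(−1/t) + c(t) = 0; and (ii) for all t ∈ ℝ with t ≠ 0 and t ≠ −1, ((t+1)²)^{−s}·c(−1/(t+1)) + (t²)^{−s}·c(−1 − 1/t) + c(t) = 0. -/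
open Complex

/-- Let `f` be an eigenfunction with eigenvalue `1` of the transfer operator `ℒ_s`,
i.e. `f(t) = f(t+1) + ((t+1)²)^{-s}·f(t/(t+1))` for all `t > 0`, and let `c` be the
attached cocycle value on `S`: `c(t) = f(t)` for `t > 0`, `c(t) = -(t²)^{-s}·f(-1/t)`
for `t < 0`, and `c(0) = 0`. Then `c` satisfies the relations `τ_s(S)c + c = 0` and
`(τ_s((ST)²) + τ_s(ST) + 1)c = 0`:
(i) `(t²)^{-s}·c(-1/t) + c(t) = 0` for all `t ≠ 0`;
(ii) `((t+1)²)^{-s}·c(-1/(t+1)) + (t²)^{-s}·c(-1 - 1/t) + c(t) = 0` for `t ≠ 0, -1`. -/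
theorem cocycle_relations (s : ℂ) (f c : ℝ → ℂ)
    (hf : ∀ t : ℝ, 0 < t →
      f t = f (t + 1) + (((t + 1) ^ 2 : ℝ) : ℂ) ^ (-s) * f (t / (t + 1)))
    (hcpos : ∀ t : ℝ, 0 < t → c t = f t)
    (hcneg : ∀ t : ℝ, t < 0 → c t = -((t ^ 2 : ℝ) : ℂ) ^ (-s) * f (-1 / t))
    (hczero : c 0 = 0) :
    (∀ t : ℝ, t ≠ 0 →
      ((t ^ 2 : ℝ) : ℂ) ^ (-s) * c (-1 / t) + c t = 0) ∧
    (∀ t : ℝ, t ≠ 0 → t ≠ -1 →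
      (((t + 1) ^ 2 : ℝ) : ℂ) ^ (-s) * c (-1 / (t + 1)) +
        ((t ^ 2 : ℝ) : ℂ) ^ (-s) * c (-1 - 1 / t) + c t = 0) := by
  have hmul : ∀ a b r : ℝ, 0 ≤ a → 0 ≤ b → a * b = r →
      ((a : ℂ)) ^ (-s) * ((b : ℂ)) ^ (-s) = ((r : ℝ) : ℂ) ^ (-s) := by
    intro a b r ha hb hr
    rw [← hr, Complex.ofReal_mul, Complex.mul_cpow_ofReal_nonneg ha hb]
  have hone : (((1 : ℝ)) : ℂ) ^ (-s) = 1 := by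
    rw [Complex.ofReal_one, Complex.one_cpow]
  constructor
  · intro t ht
    rcases lt_or_gt_of_ne ht with htn | htp
    · -- t < 0
      have h1 : (0 : ℝ) < -1 / t := div_pos_of_neg_of_neg (by norm_num) htn
      rw [hcpos _ h1, hcneg t htn]
      ring
    · -- t > 0
      have h1 : (-1 : ℝ) / t < 0 := div_neg_of_neg_of_pos (by norm_num) htp
      rw [hcpos t htp, hcneg _ h1,
        show (-1 : ℝ) / (-1 / t) = t from by field_simp]
      have h3 : ((t ^ 2 : ℝ) : ℂ) ^ (-s) * ((((-1 / t) ^ 2 : ℝ)) : ℂ) ^ (-s) = 1 := by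
        rw [hmul _ _ 1 (sq_nonneg _) (sq_nonneg _) (by field_simp), hone]
      linear_combination -(f t) * h3
  · intro t ht0 ht1
    have ht1' : t + 1 ≠ 0 := fun h => ht1 (by linarith)
    rcases lt_or_gt_of_ne ht0 with htn | htp
    · have hkey : (-1 : ℝ) - 1 / t = -((t + 1) / t) := by field_simp; ring
      rcases lt_or_gt_of_ne (sub_ne_zero.mpr ht1) with hlt | hgt
      · -- t < -1
        have hlt' : t < -1 := by linarith
        have h1 : (0 : ℝ) < -1 / (t + 1) :=
          div_pos_of_neg_of_neg (by norm_num) (by linarith)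
        have h2 : (-1 : ℝ) - 1 / t < 0 := by
          rw [hkey]
          have : 0 < (t + 1) / t := div_pos_of_neg_of_neg (by linarith) htn
          linarith
        rw [hcpos _ h1, hcneg _ h2, hcneg t htn,
          show (-1 : ℝ) / (-1 - 1 / t) = t / (t + 1) from by
            rw [div_eq_div_iff h2.ne ht1']; field_simp; ring]
        have hft := hf _ h1
        rw [show (-1 : ℝ) / (t + 1) + 1 = t / (t + 1) from by field_simp; try ring,
          show (-1 : ℝ) / (t + 1) / (t / (t + 1)) = -1 / t from by
            field_simp] at hft
        have hB2 : ((t ^ 2 : ℝ) : ℂ) ^ (-s) * ((((-1 - 1 / t) ^ 2 : ℝ)) : ℂ) ^ (-s)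
            = (((t + 1) ^ 2 : ℝ) : ℂ) ^ (-s) :=
          hmul _ _ _ (sq_nonneg _) (sq_nonneg _) (by field_simp; ring)
        have hD : (((t + 1) ^ 2 : ℝ) : ℂ) ^ (-s) * ((((t / (t + 1)) ^ 2 : ℝ)) : ℂ) ^ (-s)
            = ((t ^ 2 : ℝ) : ℂ) ^ (-s) :=
          hmul _ _ _ (sq_nonneg _) (sq_nonneg _) (by field_simp; try ring)
        linear_combination (((t + 1) ^ 2 : ℝ) : ℂ) ^ (-s) * hft
          - f (t / (t + 1)) * hB2 + f (-1 / t) * hD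
      · -- -1 < t < 0
        have hgt' : -1 < t := by linarith
        have h1 : (-1 : ℝ) / (t + 1) < 0 :=
          div_neg_of_neg_of_pos (by norm_num) (by linarith)
        have h2 : (0 : ℝ) < -1 - 1 / t := by
          rw [hkey]
          have : (t + 1) / t < 0 := div_neg_of_pos_of_neg (by linarith) htn
          linarith
        rw [hcneg _ h1, hcpos _ h2, hcneg t htn,
          show (-1 : ℝ) / (-1 / (t + 1)) = t + 1 from by field_simp; try ring]
        have hft := hf _ h2
        rw [show (-1 : ℝ) - 1 / t + 1 = -1 / t from by field_simp; try ring,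
          show ((-1 : ℝ) - 1 / t) / (-1 / t) = t + 1 from by
            field_simp; try ring] at hft
        have hA : (((t + 1) ^ 2 : ℝ) : ℂ) ^ (-s) * ((((-1 / (t + 1)) ^ 2 : ℝ)) : ℂ) ^ (-s)
            = 1 := by
          rw [hmul _ _ 1 (sq_nonneg _) (sq_nonneg _) (by field_simp), hone]
        have hC : ((t ^ 2 : ℝ) : ℂ) ^ (-s) * ((((-1 / t) ^ 2 : ℝ)) : ℂ) ^ (-s) = 1 := by
          rw [hmul _ _ 1 (sq_nonneg _) (sq_nonneg _) (by field_simp), hone]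
        linear_combination -f (t + 1) * hA + ((t ^ 2 : ℝ) : ℂ) ^ (-s) * hft
          + f (t + 1) * hC
    · -- t > 0
      have h1 : (-1 : ℝ) / (t + 1) < 0 := div_neg_of_neg_of_pos (by norm_num) (by linarith)
      have h2 : (-1 : ℝ) - 1 / t < 0 := by
        have : 0 < 1 / t := by positivity
        linarith
      rw [hcpos t htp, hcneg _ h1, hcneg _ h2,
        show (-1 : ℝ) / (-1 / (t + 1)) = t + 1 from by field_simp; try ring,
        show (-1 : ℝ) / (-1 - 1 / t) = t / (t + 1) from by
          rw [div_eq_div_iff h2.ne ht1']; field_simp; ring]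
      have hA : (((t + 1) ^ 2 : ℝ) : ℂ) ^ (-s) * ((((-1 / (t + 1)) ^ 2 : ℝ)) : ℂ) ^ (-s) = 1 := by
        rw [hmul _ _ 1 (sq_nonneg _) (sq_nonneg _) (by field_simp), hone]
      have hB : ((t ^ 2 : ℝ) : ℂ) ^ (-s) * ((((-1 - 1 / t) ^ 2 : ℝ)) : ℂ) ^ (-s)
          = (((t + 1) ^ 2 : ℝ) : ℂ) ^ (-s) :=
        hmul _ _ _ (sq_nonneg _) (sq_nonneg _) (by field_simp; ring)
      linear_combination -f (t + 1) * hA - f (t / (t + 1)) * hB + hf t htp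
end
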